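/- arXiv:0903.3894 — 2 statements merged into one kernel-verified Lean document; each statement's English description precedes it below -/
import Mathlib

section
/- Consider the 3-qubit (6×6 block) matrices A = CNOT(1,2)(D^{l₀}) and B = CNOT(3,1)(D^{l₁}) for integers l₀, l₁. Their product A·B has Z-block equal to [[1,0,D^{-l₁}],[D^{-l₀},1,D^{-(l₀+l₁)}],[0,0,1]] and X-block equal to [[1,D^{l₀},0],[0,1,0],[D^{l₁},0,1]]. Consequently, if l₀ and l₁ have the same sign then |deg|(A·B) = |l₀+l₁|, and if they have opposite signs then |deg|(A·B) = max(|l₀|,|l₁|). -/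
open LaurentPolynomial Matrix
open scoped Classical

abbrev R2 := LaurentPolynomial (ZMod 2)

noncomputable def absDeg (b : R2) : ℕ :=
  (max ((b.coeff.support.max).getD 0) |(b.coeff.support.min).getD 0|).toNat

noncomputable def matAbsDeg {m n : Type*} [Fintype m] [Fintype n]
    (B : Matrix m n R2) : ℕ :=
  (Finset.univ.filter fun p : m × n => B p.1 p.2 ≠ 0).sup
    fun p => absDeg (B p.1 p.2)

/-- `CNOT(i,j)(D^l)` on three qubits, acting on row vectors `(z₁,z₂,z₃|x₁,x₂,x₃)`:
block-diagonal with Z-part `I₃ + D^{-l}E_{ji}` and X-part `I₃ + D^l E_{ij}`. -/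
noncomputable def cnot3 (i j : Fin 3) (l : ℤ) :
    Matrix (Fin 3 ⊕ Fin 3) (Fin 3 ⊕ Fin 3) R2 :=
  Matrix.fromBlocks (1 + (T (-l) : R2) • Matrix.single j i (1 : R2)) 0 0
    (1 + (T l : R2) • Matrix.single i j (1 : R2))

/-! Both blocks are products of two matrices of the form `1 + E`. In the Z-block the two
off-diagonal positions chain (`E₁₀ E₀₂ = E₁₂`), which creates the extra monomial
`D^{-(l₀+l₁)}`; in the X-block they do not. Every nonzero entry is `1` or a monomial `D^k`,
of absolute degree `|k|`, so `|deg|(AB) = max(|l₀+l₁|, |l₀|, |l₁|)`, and `|l₀+l₁|` is the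
largest of the three exactly when `l₀` and `l₁` have the same sign. -/

lemma support_coeff_T (n : ℤ) : (T n : R2).coeff.support = {n} :=
  Finsupp.support_single n one_ne_zero

lemma absDeg_T (n : ℤ) : absDeg (T n) = n.natAbs := by
  rw [absDeg, support_coeff_T, Finset.max_singleton, Finset.min_singleton]
  change (max n |n|).toNat = n.natAbs
  rw [max_eq_right (le_abs_self n), Int.abs_eq_natAbs, Int.toNat_natCast]

lemma absDeg_one : absDeg (1 : R2) = 0 := by
  simpa using absDeg_T 0

lemma absDeg_zero : absDeg (0 : R2) = 0 := rfl

section matAbsDeg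

variable {m n : Type*} [Fintype m] [Fintype n]

lemma matAbsDeg_le_iff {B : Matrix m n R2} {d : ℕ} :
    matAbsDeg B ≤ d ↔ ∀ i j, absDeg (B i j) ≤ d := by
  refine ⟨fun h i j => ?_, fun h => Finset.sup_le fun p _ => h p.1 p.2⟩
  by_cases hij : B i j = 0
  · simp [hij, absDeg_zero]
  · exact (Finset.le_sup (f := fun p : m × n => absDeg (B p.1 p.2))
      (Finset.mem_filter.mpr ⟨Finset.mem_univ (i, j), hij⟩)).trans h

lemma absDeg_le_matAbsDeg (B : Matrix m n R2) (i : m) (j : n) :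
    absDeg (B i j) ≤ matAbsDeg B :=
  matAbsDeg_le_iff.mp le_rfl i j

end matAbsDeg

section transvection

variable {n α : Type*} [Fintype n] [DecidableEq n] [Semiring α]

lemma one_add_single_mul_one_add_single_same (i j k : n) (a b : α) :
    (1 + single i j a) * (1 + single j k b) =
      1 + single i j a + single j k b + single i k (a * b) := by
  rw [mul_add, add_mul, add_mul, single_mul_single_same]
  simp only [one_mul, mul_one, add_assoc]

lemma one_add_single_mul_one_add_single_of_ne {i j k l : n} (hjk : j ≠ k) (a b : α) :
    (1 + single i j a) * (1 + single k l b) = 1 + single i j a + single k l b := by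
  rw [mul_add, add_mul, add_mul, single_mul_single_of_ne a i j k hjk]
  simp only [one_mul, mul_one, add_zero, add_assoc]

end transvection

lemma cnot3_eq_fromBlocks (i j : Fin 3) (l : ℤ) :
    cnot3 i j l = fromBlocks (1 + single j i (T (-l))) 0 0 (1 + single i j (T l)) := by
  simp [cnot3, smul_single]

lemma cnot3_mul_cnot3 (l₀ l₁ : ℤ) :
    cnot3 0 1 l₀ * cnot3 2 0 l₁ =
      fromBlocks !![1, 0, T (-l₁); T (-l₀), 1, T (-(l₀ + l₁)); 0, 0, 1] 0 0
        !![1, T l₀, 0; 0, 1, 0; T l₁, 0, 1] := by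
  rw [cnot3_eq_fromBlocks, cnot3_eq_fromBlocks, fromBlocks_multiply,
    one_add_single_mul_one_add_single_same,
    one_add_single_mul_one_add_single_of_ne (by decide), ← T_add, neg_add]
  simp only [mul_zero, zero_mul, add_zero, zero_add]
  congr 1 <;> ext i j <;> fin_cases i <;> fin_cases j <;> simp [one_apply]

lemma matAbsDeg_cnot3_mul_cnot3 (l₀ l₁ : ℤ) :
    matAbsDeg (cnot3 0 1 l₀ * cnot3 2 0 l₁) =
      max (l₀ + l₁).natAbs (max l₀.natAbs l₁.natAbs) := by
  have natAbs_sum : (-l₁ + -l₀).natAbs = (l₀ + l₁).natAbs := by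
    rw [← neg_add_rev, Int.natAbs_neg]
  rw [cnot3_mul_cnot3]
  apply le_antisymm
  · rw [matAbsDeg_le_iff]
    rintro (i | i) (j | j) <;> fin_cases i <;> fin_cases j <;>
      simp [absDeg_T, absDeg_one, absDeg_zero, natAbs_sum]
  · refine max_le (le_trans ?_ (absDeg_le_matAbsDeg _ (.inl 1) (.inl 2)))
      (max_le (le_trans ?_ (absDeg_le_matAbsDeg _ (.inl 1) (.inl 0)))
        (le_trans ?_ (absDeg_le_matAbsDeg _ (.inl 0) (.inl 2)))) <;>
      simp [absDeg_T, natAbs_sum]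

/-- The product `CNOT(1,2)(D^{l₀}) · CNOT(3,1)(D^{l₁})` has the stated Z- and
X-blocks, and its absolute degree is `|l₀+l₁|` when `l₀, l₁` have the same sign
and `max(|l₀|,|l₁|)` when they have opposite signs. -/
theorem cnot3_product_blocks_and_absDeg (l₀ l₁ : ℤ) :
    (cnot3 0 1 l₀ * cnot3 2 0 l₁ =
      Matrix.fromBlocks
        !![1, 0, T (-l₁); T (-l₀), 1, T (-(l₀ + l₁)); 0, 0, 1] 0 0
        !![1, T l₀, 0; 0, 1, 0; T l₁, 0, 1]) ∧
    ((0 ≤ l₀ ∧ 0 ≤ l₁) ∨ (l₀ ≤ 0 ∧ l₁ ≤ 0) →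
      matAbsDeg (cnot3 0 1 l₀ * cnot3 2 0 l₁) = (l₀ + l₁).natAbs) ∧
    ((l₀ ≤ 0 ∧ 0 ≤ l₁) ∨ (l₁ ≤ 0 ∧ 0 ≤ l₀) →
      matAbsDeg (cnot3 0 1 l₀ * cnot3 2 0 l₁) = max l₀.natAbs l₁.natAbs) := by
  refine ⟨cnot3_mul_cnot3 l₀ l₁, fun h => ?_, fun h => ?_⟩ <;>
    rw [matAbsDeg_cnot3_mul_cnot3] <;> omega
end

section
/- The encoding matrix B(D) = diag(E_Z(D), E_X(D)) of a CSS quantum convolutional code, where E_X(D) = (I ⊕ (B₃ᵀ)⁻¹(D⁻¹)) B₂(D) and E_Z(D) = (I ⊕ B₃(D)) (B₂ᵀ)⁻¹(D⁻¹), is shift-invariant symplectic: B(D) J B(D⁻¹)ᵀ = J, where J = [[0,I_n],[I_n,0]]. Equivalently, E_Z(D) · E_X(D⁻¹)ᵀ = I_n. -/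
open LaurentPolynomial Matrix

/-- The substitution `D ↦ D⁻¹` on Laurent polynomials over `F₂`. -/
noncomputable def inv2 : R2 →+* R2 := (LaurentPolynomial.invert (R := ZMod 2)).toRingHom

lemma inv2_inv2 (x : R2) : inv2 (inv2 x) = x :=
  LaurentPolynomial.involutive_invert x

lemma map_inv2_inv2 {n p : Type*} (A : Matrix n p R2) :
    (A.map inv2).map inv2 = A := by
  ext i j; simp [Matrix.map_apply, inv2_inv2]

lemma isUnit_map_inv2 {n : Type*} [DecidableEq n] [Fintype n]
    (A : Matrix n n R2) (h : IsUnit A) : IsUnit (A.map inv2) := by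
  rw [Matrix.isUnit_iff_isUnit_det] at h ⊢
  rw [show (A.map ⇑inv2).det = inv2 A.det from (RingHom.map_det inv2 A).symm]
  exact h.map inv2

lemma isUnit_transpose {n : Type*} [DecidableEq n] [Fintype n]
    (A : Matrix n n R2) (h : IsUnit A) : IsUnit Aᵀ := by
  rw [Matrix.isUnit_iff_isUnit_det] at h ⊢
  rwa [Matrix.det_transpose]

/-- The encoding matrix `B(D) = diag(E_Z(D), E_X(D))` of a CSS quantum
convolutional code, with `E_X = (I ⊕ (B₃ᵀ)⁻¹(D⁻¹)) B₂(D)` and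
`E_Z = (I ⊕ B₃(D)) (B₂ᵀ)⁻¹(D⁻¹)`, is shift-invariant symplectic:
`B(D) J B(D⁻¹)ᵀ = J`; equivalently `E_Z(D) E_X(D⁻¹)ᵀ = I`. -/
theorem css_encoding_matrix_symplectic
    {k m : ℕ}
    (B₂ : Matrix (Fin k ⊕ Fin m) (Fin k ⊕ Fin m) R2)
    (B₃ : Matrix (Fin m) (Fin m) R2)
    (hB₂ : IsUnit B₂) (hB₃ : IsUnit B₃) :
    let EX : Matrix (Fin k ⊕ Fin m) (Fin k ⊕ Fin m) R2 :=
      Matrix.fromBlocks 1 0 0 ((B₃ᵀ.map inv2)⁻¹) * B₂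
    let EZ : Matrix (Fin k ⊕ Fin m) (Fin k ⊕ Fin m) R2 :=
      Matrix.fromBlocks 1 0 0 B₃ * ((B₂ᵀ.map inv2)⁻¹)
    let B : Matrix ((Fin k ⊕ Fin m) ⊕ (Fin k ⊕ Fin m))
        ((Fin k ⊕ Fin m) ⊕ (Fin k ⊕ Fin m)) R2 :=
      Matrix.fromBlocks EZ 0 0 EX
    let J : Matrix ((Fin k ⊕ Fin m) ⊕ (Fin k ⊕ Fin m))
        ((Fin k ⊕ Fin m) ⊕ (Fin k ⊕ Fin m)) R2 :=
      Matrix.fromBlocks 0 1 1 0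
    B * J * (B.map inv2)ᵀ = J ∧ EZ * (EX.map inv2)ᵀ = 1 := by
  intro EX EZ B J
  set M : Matrix (Fin m) (Fin m) R2 := B₃ᵀ.map inv2 with hM
  have hMu : IsUnit M := isUnit_map_inv2 _ (isUnit_transpose _ hB₃)
  have hB₂u : IsUnit (B₂ᵀ.map inv2) := isUnit_map_inv2 _ (isUnit_transpose _ hB₂)
  -- key block fact : B₃ * ((M⁻¹.map inv2)ᵀ) = 1
  have hblock : B₃ * ((M⁻¹.map inv2)ᵀ) = 1 := by
    rw [mul_eq_one_comm]
    have : (M⁻¹.map inv2)ᵀ * B₃ = ((B₃ᵀ) * (M⁻¹.map inv2))ᵀ := by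
      rw [Matrix.transpose_mul, Matrix.transpose_transpose]
    rw [this]
    have hB3 : B₃ᵀ = M.map inv2 := (map_inv2_inv2 B₃ᵀ).symm
    rw [hB3, ← Matrix.map_mul, Matrix.mul_nonsing_inv _ (((Matrix.isUnit_iff_isUnit_det _).mp hMu))]
    simp
  have hEXm : (EX.map inv2)ᵀ = (B₂ᵀ.map inv2) *
      Matrix.fromBlocks 1 0 0 ((M⁻¹.map inv2)ᵀ) := by
    show ((Matrix.fromBlocks 1 0 0 (M⁻¹) * B₂).map inv2)ᵀ = _
    rw [Matrix.map_mul, Matrix.transpose_mul, ← Matrix.transpose_map,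
      Matrix.fromBlocks_map, Matrix.fromBlocks_transpose]
    simp
  have h1 : EZ * (EX.map inv2)ᵀ = 1 := by
    show Matrix.fromBlocks 1 0 0 B₃ * ((B₂ᵀ.map inv2)⁻¹) * (EX.map inv2)ᵀ = 1
    rw [hEXm, Matrix.mul_assoc, ← Matrix.mul_assoc ((B₂ᵀ.map inv2)⁻¹),
      Matrix.nonsing_inv_mul _ (((Matrix.isUnit_iff_isUnit_det _).mp hB₂u)), Matrix.one_mul,
      Matrix.fromBlocks_multiply]
    simp [hblock]
  refine ⟨?_, h1⟩
  have h2 : EX * (EZ.map inv2)ᵀ = 1 := by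
    have ht : (EX.map inv2) * EZᵀ = 1 := by
      have := congrArg Matrix.transpose h1
      rwa [Matrix.transpose_mul, Matrix.transpose_transpose, Matrix.transpose_one] at this
    have := congrArg (Matrix.map · inv2) ht
    simp only [Matrix.map_mul, map_inv2_inv2, Matrix.map_one inv2 (map_zero _) (map_one _)] at this
    rwa [Matrix.transpose_map] at this
  show Matrix.fromBlocks EZ 0 0 EX * J * (Matrix.fromBlocks EZ 0 0 EX |>.map inv2)ᵀ = J
  rw [Matrix.fromBlocks_map, Matrix.fromBlocks_transpose]
  show _ * Matrix.fromBlocks 0 1 1 0 * _ = Matrix.fromBlocks 0 1 1 0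
  rw [Matrix.fromBlocks_multiply, Matrix.fromBlocks_multiply]
  simp [h1, h2]
end
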